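/- Let p : (−1,1) → ℝ with p(x) ≤ 1/(1−x²)², and let V > 0 solve V'' + pV = 0 on (−1,1). Then W(x) = V(x)/√(1−x²) satisfies (d²/ds²) W(x(s)) = (1/(1−x²)² − p(x)) (1−x²)² W(x) ≥ 0 in the hyperbolic arclength parameter s, with x = x(s) = (e^{2s}−1)/(e^{2s}+1). -/

import Mathlib

/-!
In the arclength parameter, `X = tanh` and `√(1 - X²) = 1 / cosh`, so `W ∘ X = (V ∘ tanh) * cosh`.
Differentiating twice, the first-order terms `V'(tanh s)` cancel and
`(W ∘ X)'' = (V''(x) (1 - x²)² + V(x)) cosh s` with `x = tanh s`; the equation `V'' = -pV`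
turns this into the claimed formula, and its sign is that of `1/(1 - x²)² - p(x)`.
-/

open Set Real

namespace Real

theorem tanh_eq_exp_two_mul (s : ℝ) : tanh s = (exp (2 * s) - 1) / (exp (2 * s) + 1) := by
  rw [tanh_eq, exp_neg, two_mul, exp_add]
  field_simp

theorem tanh_mem_Ioo (s : ℝ) : tanh s ∈ Ioo (-1) 1 := ⟨neg_one_lt_tanh s, tanh_lt_one s⟩

theorem one_sub_tanh_sq (s : ℝ) : 1 - tanh s ^ 2 = (cosh s ^ 2)⁻¹ := by
  rw [tanh_eq_sinh_div_cosh, div_pow, cosh_sq]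
  field_simp
  ring

theorem sqrt_one_sub_tanh_sq (s : ℝ) : √(1 - tanh s ^ 2) = (cosh s)⁻¹ := by
  rw [one_sub_tanh_sq, ← inv_pow, sqrt_sq (inv_nonneg.2 (cosh_pos s).le)]

theorem hasDerivAt_tanh (s : ℝ) : HasDerivAt tanh (1 - tanh s ^ 2) s := by
  have h := (hasDerivAt_sinh s).div (hasDerivAt_cosh s) (cosh_pos s).ne'
  rw [show tanh = sinh / cosh from funext tanh_eq_sinh_div_cosh]
  refine h.congr_deriv ?_
  rw [Pi.div_apply, div_pow, one_sub_div (pow_ne_zero 2 (cosh_pos s).ne'), sq, sq]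

end Real

section TanhCoshTransform

variable {f f' f'' : ℝ → ℝ}

theorem hasDerivAt_comp_tanh_mul_cosh (hf : ∀ x ∈ Ioo (-1 : ℝ) 1, HasDerivAt f (f' x) x)
    (s : ℝ) :
    HasDerivAt (fun t => f (tanh t) * cosh t)
      (f' (tanh s) * (1 - tanh s ^ 2) * cosh s + f (tanh s) * sinh s) s :=
  ((hf _ (tanh_mem_Ioo s)).comp s (hasDerivAt_tanh s)).mul (hasDerivAt_cosh s)

theorem deriv_deriv_comp_tanh_mul_cosh (hf : ∀ x ∈ Ioo (-1 : ℝ) 1, HasDerivAt f (f' x) x)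
    (hf' : ∀ x ∈ Ioo (-1 : ℝ) 1, HasDerivAt f' (f'' x) x) (s : ℝ) :
    deriv (deriv fun t => f (tanh t) * cosh t) s =
      (f'' (tanh s) * (1 - tanh s ^ 2) ^ 2 + f (tanh s)) * cosh s := by
  rw [funext fun t => (hasDerivAt_comp_tanh_mul_cosh hf t).deriv]
  have hx := tanh_mem_Ioo s
  have hderiv : HasDerivAt (fun t => f' (tanh t) * (1 - tanh t ^ 2) * cosh t + f (tanh t) * sinh t)
      _ s :=
    ((((hf' _ hx).comp s (hasDerivAt_tanh s)).mul
      (((hasDerivAt_tanh s).pow 2).const_sub 1)).mul (hasDerivAt_cosh s)).add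
    (((hf _ hx).comp s (hasDerivAt_tanh s)).mul (hasDerivAt_sinh s))
  have hsinh : sinh s = tanh s * cosh s := by
    rw [tanh_eq_sinh_div_cosh, div_mul_cancel₀ _ (cosh_pos s).ne']
  rw [hderiv.deriv, hsinh]
  simp only [Function.comp_apply, Pi.mul_apply, Pi.pow_apply]
  ring

end TanhCoshTransform

/-- If `V > 0` solves `V'' + pV = 0` on `(−1,1)` with `p(x) ≤ 1/(1−x²)²`, then
`W(x) = V(x)/√(1−x²)` satisfies, in the hyperbolic arclength parameter `s` (with
`x(s) = (e^{2s}−1)/(e^{2s}+1)`),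
`(d²/ds²) W(x(s)) = (1/(1−x²)² − p(x))(1−x²)² W(x) ≥ 0`. -/
theorem second_deriv_W_hyperbolic
    (V V' V'' : ℝ → ℝ) (p : ℝ → ℝ)
    (hpos : ∀ x ∈ Ioo (-1 : ℝ) 1, 0 < V x)
    (hd1 : ∀ x ∈ Ioo (-1 : ℝ) 1, HasDerivAt V (V' x) x)
    (hd2 : ∀ x ∈ Ioo (-1 : ℝ) 1, HasDerivAt V' (V'' x) x)
    (hode : ∀ x ∈ Ioo (-1 : ℝ) 1, V'' x + p x * V x = 0)
    (hp : ∀ x ∈ Ioo (-1 : ℝ) 1, p x ≤ 1 / (1 - x ^ 2) ^ 2)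
    (W : ℝ → ℝ) (hW : ∀ x, W x = V x / Real.sqrt (1 - x ^ 2))
    (X : ℝ → ℝ) (hX : ∀ s, X s = (Real.exp (2 * s) - 1) / (Real.exp (2 * s) + 1)) :
    ∀ s : ℝ,
      deriv (deriv (fun t => W (X t))) s =
          (1 / (1 - X s ^ 2) ^ 2 - p (X s)) * (1 - X s ^ 2) ^ 2 * W (X s) ∧
        0 ≤ deriv (deriv (fun t => W (X t))) s := by
  have hX_eq : X = tanh := funext fun t => (hX t).trans (tanh_eq_exp_two_mul t).symm
  have hWX : (fun t => W (X t)) = fun t => V (tanh t) * cosh t := by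
    funext t
    rw [hW, hX_eq, sqrt_one_sub_tanh_sq, div_inv_eq_mul]
  intro s
  have hx := tanh_mem_Ioo s
  have hW_pos : 0 < W (X s) := by
    rw [congrFun hWX s]
    exact mul_pos (hpos _ hx) (cosh_pos s)
  have h_one_sub_sq_ne : 1 - tanh s ^ 2 ≠ 0 := by
    rw [one_sub_tanh_sq]
    exact inv_ne_zero (pow_ne_zero 2 (cosh_pos s).ne')
  have h_second_deriv : deriv (deriv fun t => W (X t)) s =
      (1 / (1 - X s ^ 2) ^ 2 - p (X s)) * (1 - X s ^ 2) ^ 2 * W (X s) := by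
    rw [congrFun hWX s, hWX, deriv_deriv_comp_tanh_mul_cosh hd1 hd2,
      eq_neg_of_add_eq_zero_left (hode _ hx), hX_eq]
    field_simp
    ring
  refine ⟨h_second_deriv, h_second_deriv ▸ ?_⟩
  exact mul_nonneg (mul_nonneg (sub_nonneg.2 (hp _ (hX_eq ▸ hx))) (sq_nonneg _)) hW_pos.le
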